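/- For every k ≥ 0, ⟨∇_v G(u^k,v^k), v^{k+1} − v^k⟩ + H(v^{k+1}) − H(v^k) + ⟨q^k, B(v^{k+1} − v^k)⟩ ≤ −γ‖B(v^k − v^{k+1})‖² + (L_H/2)‖v^k − v^{k+1}‖². -/

import Mathlib

open scoped RealInnerProductSpace BigOperators
open Filter

noncomputable section

/-- Problem data for the NAPP-AL method applied to
`min G(u,v)+J(u)+H(v)  s.t.  Ω(u)+Φ(u)+Bv = 0, u ∈ U`. -/
structure NAPP (n d m : ℕ) where
  /-- the closed convex constraint set -/
  U : Set (EuclideanSpace ℝ (Fin n))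
  G : EuclideanSpace ℝ (Fin n) → EuclideanSpace ℝ (Fin d) → ℝ
  /-- partial gradient of `G` in `u` -/
  Gu : EuclideanSpace ℝ (Fin n) → EuclideanSpace ℝ (Fin d) → EuclideanSpace ℝ (Fin n)
  /-- partial gradient of `G` in `v` -/
  Gv : EuclideanSpace ℝ (Fin n) → EuclideanSpace ℝ (Fin d) → EuclideanSpace ℝ (Fin d)
  H : EuclideanSpace ℝ (Fin d) → ℝ
  /-- gradient of `H` -/
  Hg : EuclideanSpace ℝ (Fin d) → EuclideanSpace ℝ (Fin d)
  J : EuclideanSpace ℝ (Fin n) → ℝ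
  /-- Ω -/
  Om : EuclideanSpace ℝ (Fin n) → EuclideanSpace ℝ (Fin m)
  /-- Jacobian of Ω -/
  Omd : EuclideanSpace ℝ (Fin n) → (EuclideanSpace ℝ (Fin n) →L[ℝ] EuclideanSpace ℝ (Fin m))
  /-- gradient of the `j`-th component of Ω -/
  Omg : Fin m → EuclideanSpace ℝ (Fin n) → EuclideanSpace ℝ (Fin n)
  /-- Φ -/
  Phi : EuclideanSpace ℝ (Fin n) → EuclideanSpace ℝ (Fin m)
  /-- Jacobian of Φ -/
  Phid : EuclideanSpace ℝ (Fin n) → (EuclideanSpace ℝ (Fin n) →L[ℝ] EuclideanSpace ℝ (Fin m))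
  B : EuclideanSpace ℝ (Fin d) →L[ℝ] EuclideanSpace ℝ (Fin m)
  K : EuclideanSpace ℝ (Fin n) → ℝ
  /-- gradient of `K` -/
  Kg : EuclideanSpace ℝ (Fin n) → EuclideanSpace ℝ (Fin n)
  LG : ℝ
  LH : ℝ
  LK : ℝ
  /-- `L⁰_Θ` -/
  LT : ℝ
  /-- Lipschitz constants of the component gradients of Ω -/
  LOmj : Fin m → ℝ
  beta : ℝ
  /-- `μ > 0` with `‖Bx‖² ≥ μ‖x‖²` and `‖Bᵀy‖² ≥ μ‖y‖²` on `Im B` -/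
  mu : ℝ
  gamma : ℝ

namespace NAPP

variable {n d m : ℕ}

/-- `Θ = Ω + Φ` -/
def Th (S : NAPP n d m) (u : EuclideanSpace ℝ (Fin n)) : EuclideanSpace ℝ (Fin m) :=
  S.Om u + S.Phi u

/-- Jacobian of `Θ` -/
def Thd (S : NAPP n d m) (u : EuclideanSpace ℝ (Fin n)) :
    EuclideanSpace ℝ (Fin n) →L[ℝ] EuclideanSpace ℝ (Fin m) :=
  S.Omd u + S.Phid u

/-- the Bregman distance associated with `K` -/
def D (S : NAPP n d m) (u u' : EuclideanSpace ℝ (Fin n)) : ℝ :=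
  S.K u - S.K u' - ⟪S.Kg u', u - u'⟫

/-- `L_Ω := Σ_j L_{Ω_j}` -/
def LOm (S : NAPP n d m) : ℝ := ∑ j, S.LOmj j

/-- the overall objective `F(u,v) = G(u,v) + J(u) + H(v)` -/
def F (S : NAPP n d m) (u : EuclideanSpace ℝ (Fin n)) (v : EuclideanSpace ℝ (Fin d)) : ℝ :=
  S.G u v + S.J u + S.H v

/-- the augmented Lagrangian `L_γ` -/
def Lag (S : NAPP n d m) (u : EuclideanSpace ℝ (Fin n)) (v : EuclideanSpace ℝ (Fin d))
    (p : EuclideanSpace ℝ (Fin m)) : ℝ :=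
  S.F u v + ⟪p, S.Th u + S.B v⟫ + S.gamma / 2 * ‖S.Th u + S.B v‖ ^ 2

def c1 (S : NAPP n d m) : ℝ := 7 * (S.LG + S.gamma * ‖S.B‖ * S.LT) ^ 2 / (S.gamma * S.mu)

def c2 (S : NAPP n d m) : ℝ := 7 * (S.LG + S.LH) ^ 2 / (S.gamma * S.mu)

def c4 (S : NAPP n d m) : ℝ := (S.gamma * S.mu - (S.LG + S.LH)) / 2 - S.c2

def c3 (S : NAPP n d m) : ℝ := min (1 / 2) (min S.c4 (1 / (3 * S.gamma)))

/-- The standing assumptions (H₁)–(H₆) together with the properties of `K`, `μ` and `γ > 0`. -/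
structure Hyp (S : NAPP n d m) : Prop where
  closedU : IsClosed S.U
  convexU : Convex ℝ S.U
  gradGu : ∀ u v, HasGradientAt (fun x => S.G x v) (S.Gu u v) u
  gradGv : ∀ u v, HasGradientAt (fun y => S.G u y) (S.Gv u v) v
  lipG : ∀ u v u' v', ‖S.Gu u v - S.Gu u' v'‖ ^ 2 + ‖S.Gv u v - S.Gv u' v'‖ ^ 2
      ≤ S.LG ^ 2 * (‖u - u'‖ ^ 2 + ‖v - v'‖ ^ 2)
  gradH : ∀ v, HasGradientAt S.H (S.Hg v) v
  lipH : ∀ v v', ‖S.Hg v - S.Hg v'‖ ≤ S.LH * ‖v - v'‖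
  lscJ : LowerSemicontinuous S.J
  derivOm : ∀ u, HasFDerivAt S.Om (S.Omd u) u
  derivPhi : ∀ u, HasFDerivAt S.Phi (S.Phid u) u
  gradOmj : ∀ (j : Fin m) u, HasGradientAt (fun x => S.Om x j) (S.Omg j u) u
  lipOmj : ∀ (j : Fin m) u u', ‖S.Omg j u - S.Omg j u'‖ ≤ S.LOmj j * ‖u - u'‖
  lipTh : ∀ u u', ‖S.Th u - S.Th u'‖ ≤ S.LT * ‖u - u'‖
  injB : Function.Injective S.B
  imTh : ∀ u, ∃ v, S.B v = S.Th u
  muPos : 0 < S.mu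
  muB : ∀ x, S.mu * ‖x‖ ^ 2 ≤ ‖S.B x‖ ^ 2
  muBt : ∀ y : EuclideanSpace ℝ (Fin m), (∃ x, S.B x = y) →
      S.mu * ‖y‖ ^ 2 ≤ ‖(ContinuousLinearMap.adjoint S.B) y‖ ^ 2
  betaPos : 0 < S.beta
  strongK : ∀ x y, S.beta / 2 * ‖x - y‖ ^ 2 ≤ S.K x - S.K y - ⟪S.Kg y, x - y⟫
  gradK : ∀ u, HasGradientAt S.K (S.Kg u) u
  lipK : ∀ u u', ‖S.Kg u - S.Kg u'‖ ≤ S.LK * ‖u - u'‖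
  gammaPos : 0 < S.gamma

/-- The NAPP-AL iterates `w^k = (u^k, v^k, p^k)` with step sizes `ε^k > 0`. -/
structure Iter (S : NAPP n d m) where
  u : ℕ → EuclideanSpace ℝ (Fin n)
  v : ℕ → EuclideanSpace ℝ (Fin d)
  p : ℕ → EuclideanSpace ℝ (Fin m)
  eps : ℕ → ℝ
  epsPos : ∀ k, 0 < eps k
  uMem : ∀ k, u k ∈ S.U
  /-- `u^{k+1}` minimizes the linearized augmented Lagrangian over `U` -/
  uMin : ∀ k, ∀ x ∈ S.U,
      ⟪S.Gu (u k) (v k), u (k + 1)⟫ + S.J (u (k + 1))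
        + ⟪p k + S.gamma • (S.Th (u k) + S.B (v k)),
            S.Omd (u k) (u (k + 1)) + S.Phi (u (k + 1))⟫
        + (1 / eps k) * S.D (u (k + 1)) (u k)
      ≤ ⟪S.Gu (u k) (v k), x⟫ + S.J x
        + ⟪p k + S.gamma • (S.Th (u k) + S.B (v k)), S.Omd (u k) x + S.Phi x⟫
        + (1 / eps k) * S.D x (u k)
  /-- the first-order equation defining `v^{k+1}` -/
  vEq : ∀ k, (0 : EuclideanSpace ℝ (Fin d))
      = S.Gv (u k) (v k) + S.Hg (v k)
        + (ContinuousLinearMap.adjoint S.B) (p k + S.gamma • (S.Th (u k) + S.B (v k)))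
        + S.gamma • (ContinuousLinearMap.adjoint S.B) (S.B (v (k + 1) - v k))
  /-- the dual update -/
  pEq : ∀ k, p (k + 1) = p k + S.gamma • (S.Th (u (k + 1)) + S.B (v (k + 1)))

variable {S : NAPP n d m}

/-- `q^k = p^k + γ(Θ(u^k) + Bv^k)` -/
def Iter.q (it : Iter S) (k : ℕ) : EuclideanSpace ℝ (Fin m) :=
  it.p k + S.gamma • (S.Th (it.u k) + S.B (it.v k))

/-- `‖w^k - w^{k+1}‖²` -/
def Iter.wsq (it : Iter S) (k : ℕ) : ℝ :=
  ‖it.u k - it.u (k + 1)‖ ^ 2 + ‖it.v k - it.v (k + 1)‖ ^ 2 + ‖it.p k - it.p (k + 1)‖ ^ 2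

/-- `‖w^k - w^{k+1}‖` -/
def Iter.wnorm (it : Iter S) (k : ℕ) : ℝ := Real.sqrt (it.wsq k)

/-- distance from `w^k` to a given point `(ub, vb, pb)` -/
def Iter.distTo (it : Iter S) (k : ℕ) (ub : EuclideanSpace ℝ (Fin n))
    (vb : EuclideanSpace ℝ (Fin d)) (pb : EuclideanSpace ℝ (Fin m)) : ℝ :=
  Real.sqrt (‖it.u k - ub‖ ^ 2 + ‖it.v k - vb‖ ^ 2 + ‖it.p k - pb‖ ^ 2)

/-- the step-size cap `δ_k` -/
def Iter.delta (it : Iter S) (k : ℕ) : ℝ :=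
  S.beta / (S.LG + ‖it.q k‖ * S.LOm + S.gamma * S.LT ^ 2
    + 14 * S.gamma * ‖S.B‖ ^ 2 * S.LT ^ 2 / S.mu
    + 14 * (S.LG + S.gamma * ‖S.B‖ * S.LT) ^ 2 / (S.gamma * S.mu) + 1)

/-- the potential `Λ^k` (for `k ≥ 1`, using truncated subtraction `k - 1`) -/
def Iter.Lam (it : Iter S) (k : ℕ) : ℝ :=
  S.Lag (it.u k) (it.v k) (it.p k) + S.c1 * ‖it.u (k - 1) - it.u k‖ ^ 2
    + S.c2 * ‖it.v (k - 1) - it.v k‖ ^ 2 + 1 / (2 * S.gamma) * ‖it.p (k - 1) - it.p k‖ ^ 2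

/-- `ξ_u^k` -/
def Iter.xiu (it : Iter S) (k : ℕ) : EuclideanSpace ℝ (Fin n) :=
  S.Gu (it.u (k + 1)) (it.v (k + 1)) - S.Gu (it.u k) (it.v k)
    + (ContinuousLinearMap.adjoint (S.Omd (it.u (k + 1)) - S.Omd (it.u k))) (it.q k)
    + (ContinuousLinearMap.adjoint (S.Thd (it.u (k + 1)))) (it.p (k + 1) - it.p k)
    + S.gamma • (ContinuousLinearMap.adjoint (S.Thd (it.u (k + 1))))
        ((S.Th (it.u (k + 1)) + S.B (it.v (k + 1))) - (S.Th (it.u k) + S.B (it.v k)))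
    - (1 / it.eps k) • (S.Kg (it.u (k + 1)) - S.Kg (it.u k))

/-- `ξ_v^k` -/
def Iter.xiv (it : Iter S) (k : ℕ) : EuclideanSpace ℝ (Fin d) :=
  S.Gv (it.u (k + 1)) (it.v (k + 1)) - S.Gv (it.u k) (it.v k)
    + (S.Hg (it.v (k + 1)) - S.Hg (it.v k))
    + (ContinuousLinearMap.adjoint S.B) (it.p (k + 1) - it.p k)
    + S.gamma • (ContinuousLinearMap.adjoint S.B)
        ((S.Th (it.u (k + 1)) + S.B (it.v (k + 1))) - (S.Th (it.u k) + S.B (it.v k)))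
    - S.gamma • (ContinuousLinearMap.adjoint S.B) (S.B (it.v (k + 1) - it.v k))

/-- the value-proximity error bound (VP-EB) at `(ub, vb, pb)` with constants `κ₁, η, ν`. -/
def VPEB (it : Iter S) (Lstar κ₁ η ν : ℝ) (ub : EuclideanSpace ℝ (Fin n))
    (vb : EuclideanSpace ℝ (Fin d)) (pb : EuclideanSpace ℝ (Fin m)) : Prop :=
  ∀ k : ℕ, it.distTo (k + 1) ub vb pb < η →
    S.Lag (it.u (k + 1)) (it.v (k + 1)) (it.p (k + 1)) < Lstar + ν →
    S.Lag (it.u (k + 1)) (it.v (k + 1)) (it.p (k + 1)) - Lstar ≤ κ₁ * it.wsq k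

end NAPP

open NAPP Filter

section LipschitzGradient

variable {E : Type*} [NormedAddCommGroup E] [InnerProductSpace ℝ E] [CompleteSpace E]
  {f : E → ℝ} {f' : E → E}

theorem HasGradientAt.hasDerivAt_comp_add_smul {g x Δ : E} {t : ℝ}
    (h : HasGradientAt f g (x + t • Δ)) :
    HasDerivAt (fun s : ℝ => f (x + s • Δ)) ⟪g, Δ⟫ t := by
  have hline : HasDerivAt (fun s : ℝ => x + s • Δ) Δ t := by
    simpa using ((hasDerivAt_id t).smul_const Δ).const_add x
  simpa [Function.comp_def] using h.hasFDerivAt.comp_hasDerivAt t hline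

/-- The descent lemma. -/
theorem le_add_inner_add_of_lipschitz_gradient {L : ℝ} (hf : ∀ z, HasGradientAt f (f' z) z)
    (hlip : ∀ a b, ‖f' a - f' b‖ ≤ L * ‖a - b‖) (x y : E) :
    f y ≤ f x + ⟪f' x, y - x⟫ + L / 2 * ‖y - x‖ ^ 2 := by
  set Δ := y - x
  have hderiv (t : ℝ) := (hf (x + t • Δ)).hasDerivAt_comp_add_smul
  have hquad (t : ℝ) : HasDerivAt (fun s : ℝ => f x + s * ⟪f' x, Δ⟫ + L / 2 * s ^ 2 * ‖Δ‖ ^ 2)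
      (⟪f' x, Δ⟫ + L * t * ‖Δ‖ ^ 2) t := by
    have := (((hasDerivAt_id' t).mul_const ⟪f' x, Δ⟫).const_add (f x)).add
      (((hasDerivAt_pow 2 t).const_mul (L / 2)).mul_const (‖Δ‖ ^ 2))
    exact this.congr_deriv (by push_cast; ring)
  have hslope {t : ℝ} (ht : 0 ≤ t) : ⟪f' (x + t • Δ), Δ⟫ ≤ ⟪f' x, Δ⟫ + L * t * ‖Δ‖ ^ 2 := by
    have hlip_t := hlip (x + t • Δ) x
    rw [add_sub_cancel_left, norm_smul, Real.norm_of_nonneg ht] at hlip_t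
    have := (real_inner_le_norm (f' (x + t • Δ) - f' x) Δ).trans
      (mul_le_mul_of_nonneg_right hlip_t (norm_nonneg Δ))
    rw [inner_sub_left] at this
    linarith
  -- compare `t ↦ f (x + t • Δ)` with its quadratic upper model on `[0, 1]`
  have key := image_le_of_deriv_right_le_deriv_boundary (a := 0) (b := 1)
    (fun t _ => (hderiv t).continuousAt.continuousWithinAt)
    (fun t _ => (hderiv t).hasDerivWithinAt) (by simp)
    (fun t _ => (hquad t).continuousAt.continuousWithinAt)
    (fun t _ => (hquad t).hasDerivWithinAt) (fun t ht => hslope ht.1)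
    (Set.right_mem_Icc.2 zero_le_one)
  simpa [Δ] using key

end LipschitzGradient

namespace NAPP

variable {n d m : ℕ} {S : NAPP n d m}

theorem Iter.vEq_inner_sub (it : Iter S) (k : ℕ) :
    ⟪S.Gv (it.u k) (it.v k), it.v (k + 1) - it.v k⟫ + ⟪S.Hg (it.v k), it.v (k + 1) - it.v k⟫
        + ⟪it.q k, S.B (it.v (k + 1) - it.v k)⟫ + S.gamma * ‖S.B (it.v (k + 1) - it.v k)‖ ^ 2
      = 0 := by
  have h := congrArg (⟪·, it.v (k + 1) - it.v k⟫) (it.vEq k)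
  simp only [inner_zero_left, inner_add_left, real_inner_smul_left,
    ContinuousLinearMap.adjoint_inner_left, real_inner_self_eq_norm_sq] at h
  rw [Iter.q, inner_add_left, real_inner_smul_left, inner_add_left]
  linarith

end NAPP

open NAPP Filter

theorem stmt8 (n d m : ℕ) (S : NAPP n d m) (hS : S.Hyp) (it : Iter S) (k : ℕ) :
    ⟪S.Gv (it.u k) (it.v k), it.v (k + 1) - it.v k⟫ + S.H (it.v (k + 1)) - S.H (it.v k)
        + ⟪it.q k, S.B (it.v (k + 1) - it.v k)⟫
      ≤ -(S.gamma * ‖S.B (it.v k - it.v (k + 1))‖ ^ 2)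
        + S.LH / 2 * ‖it.v k - it.v (k + 1)‖ ^ 2 := by
  have hstep := it.vEq_inner_sub k
  have hdescent :=
    le_add_inner_add_of_lipschitz_gradient hS.gradH hS.lipH (it.v k) (it.v (k + 1))
  rw [← neg_sub (it.v (k + 1)), map_neg, norm_neg, norm_neg]
  linarith
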